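/- arXiv:2101.08756 — 3 statements merged into one kernel-verified Lean document; each statement's English description precedes it below -/
import Mathlib

section
/- For every ω-regular language L ⊆ Σ^ω, exactly one of the following holds: (1) L is DBW-recognizable; (2) there exists a DBW-refuter for L. -/
structure DetAuto (α : Type) where
  Q : Type
  [fin : Fintype Q]
  init : Q
  δ : Q → α → Q

attribute [instance] DetAuto.fin

/-- The run of a deterministic automaton on an infinite word. -/
def DetAuto.run {α : Type} (M : DetAuto α) (x : ℕ → α) : ℕ → M.Q
  | 0 => M.init
  | n + 1 => M.δ (M.run x n) (x n)

/-- Parity acceptance: the maximal color occurring infinitely often in the run is odd. -/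
def ParityAccept {α : Type} (M : DetAuto α) (c : M.Q → ℕ) (x : ℕ → α) : Prop :=
  ∃ m, Odd m ∧ (∃ᶠ n in Filter.atTop, c (M.run x n) = m) ∧
    ∀ m', (∃ᶠ n in Filter.atTop, c (M.run x n) = m') → m' ≤ m

/-- A language is ω-regular iff it is recognized by some deterministic parity automaton. -/
def OmegaRegular {α : Type} (L : Set (ℕ → α)) : Prop :=
  ∃ (M : DetAuto α) (c : M.Q → ℕ), ∀ x, x ∈ L ↔ ParityAccept M c x

/-- A language is DBW-recognizable iff some deterministic Büchi automaton recognizes it. -/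
def DBWRecognizable {α : Type} (L : Set (ℕ → α)) : Prop :=
  ∃ (M : DetAuto α) (acc : Set M.Q), ∀ x, x ∈ L ↔ ∃ᶠ n in Filter.atTop, M.run x n ∈ acc

/-- An (A/α)-transducer: reads letters of `A`, outputs letters of `α`. -/
structure Transducer (A α : Type) where
  S : Type
  [fin : Fintype S]
  init : S
  ρ : S → A → S
  τ : S → α

attribute [instance] Transducer.fin

def Transducer.run {A α : Type} (T : Transducer A α) (y : ℕ → A) : ℕ → T.S
  | 0 => T.init
  | n + 1 => T.ρ (T.run y n) (y n)

/-- Output with environment initiation: output letter `j` is emitted at state `s_{j+1}`. -/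
def Transducer.out {A α : Type} (T : Transducer A α) (y : ℕ → A) : ℕ → α :=
  fun j => T.τ (T.run y (j + 1))

/-- A DBW-refuter for `L`: a ({acc,rej}/Σ)-transducer (with `true` = acc, `false` = rej)
such that for every input `y`, the output is in `L` iff `y` has only finitely many acc's. -/
def DBWRefuter {α : Type} (L : Set (ℕ → α)) (R : Transducer Bool α) : Prop :=
  ∀ y : ℕ → Bool, R.out y ∈ L ↔ {j | y j = true}.Finite

/-!
Let `(M, c)` be a parity automaton for `L`. Call two loops through a reachable state `q`
refuting if the maximal color `m₁` of the first is odd and the maximal color `m₂` of the second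
is even with `m₁ < m₂`.

Without refuting loops, a run is accepting iff it visits infinitely often a state `q` of odd color
that is at least the maximal color of every even loop through `q`: the maximal color seen
infinitely often is the maximal color of a loop through any state visited infinitely often. So `L`
is DBW-recognizable.

With refuting loops `u`, `v` (pumped to a common length), a refuter emits a word reaching `q` and
then one loop after the other, choosing `v` exactly after the loops during which `acc` was read.
Finitely many `acc` leave eventually only `u`, whose maximal color is odd; infinitely many make `v`
recur, and then the even `m₂` is the maximal color seen infinitely often.

Both cannot happen: feeding a refuter, at each step, whether a DBW for `L` is in an accepting state
on the refuter's own output makes the output accepted iff infinitely many `acc` were read.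
-/

open Filter

namespace DetAuto

variable {α : Type}

def runFrom (M : DetAuto α) (q : M.Q) (x : ℕ → α) : ℕ → M.Q
  | 0 => q
  | n + 1 => M.δ (runFrom M q x n) (x n)

variable (M : DetAuto α)

theorem run_eq_runFrom (x : ℕ → α) (n : ℕ) : M.run x n = M.runFrom M.init x n := by
  induction n with
  | zero => rfl
  | succ n ih => simp only [run, runFrom, ih]

theorem runFrom_add (q : M.Q) (x : ℕ → α) (n j : ℕ) :
    M.runFrom q x (n + j) = M.runFrom (M.runFrom q x n) (fun i => x (n + i)) j := by
  induction j with
  | zero => rfl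
  | succ j ih => rw [← Nat.add_assoc, runFrom, ih]; rfl

theorem run_add (x : ℕ → α) (n j : ℕ) :
    M.run x (n + j) = M.runFrom (M.run x n) (fun i => x (n + i)) j := by
  rw [run_eq_runFrom, run_eq_runFrom, runFrom_add]

theorem runFrom_congr {q : M.Q} {x x' : ℕ → α} {n : ℕ} (h : ∀ i < n, x i = x' i) :
    M.runFrom q x n = M.runFrom q x' n := by
  induction n with
  | zero => rfl
  | succ n ih =>
    simp only [runFrom, h n n.lt_succ_self, ih fun i hi => h i (Nat.lt_succ_of_lt hi)]

theorem runFrom_mod {q : M.Q} {w : ℕ → α} {k : ℕ} (hk : 0 < k) (hw : M.runFrom q w k = q)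
    (n : ℕ) : M.runFrom q (fun i => w (i % k)) n = M.runFrom q w (n % k) := by
  induction n with
  | zero => simp [runFrom]
  | succ n ih =>
    have hmod : (n + 1) % k = (n % k + 1) % k := by simp [Nat.add_mod]
    obtain hlt | heq : n % k + 1 < k ∨ n % k + 1 = k := Nat.lt_or_eq_of_le (Nat.mod_lt n hk)
    · rw [runFrom, ih, hmod, Nat.mod_eq_of_lt hlt]; rfl
    · rw [runFrom, ih, hmod, heq, Nat.mod_self]
      exact (congrArg (M.runFrom q w) heq).trans hw

end DetAuto

theorem frequently_exists_eq_of_frequently {Q : Type} [Finite Q] (r : ℕ → Q) {p : ℕ → Prop}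
    (h : ∃ᶠ n in atTop, p n) : ∃ q, ∃ᶠ n in atTop, p n ∧ r n = q :=
  frequently_exists.1 (h.mono fun n hn => ⟨r n, hn, rfl⟩)

theorem eventually_frequently_eq {Q : Type} [Finite Q] (r : ℕ → Q) :
    ∀ᶠ n in atTop, ∃ᶠ m in atTop, r m = r n := by
  have : ∀ᶠ n in atTop, ∀ q, (¬∃ᶠ m in atTop, r m = q) → r n ≠ q :=
    eventually_all.2 fun q => by
      by_cases hq : ∃ᶠ m in atTop, r m = q
      · exact .of_forall fun _ h => absurd hq h
      · exact (not_frequently.1 hq).mono fun _ h _ => h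
  exact this.mono fun n hn => not_not.1 fun h => hn (r n) h rfl

def IsMaxFrequentValue (f : ℕ → ℕ) (m : ℕ) : Prop :=
  (∃ᶠ n in atTop, f n = m) ∧ ∀ᶠ n in atTop, f n ≤ m

theorem IsMaxFrequentValue.le_of_frequently {f : ℕ → ℕ} {m m' : ℕ} (h : IsMaxFrequentValue f m)
    (h' : ∃ᶠ n in atTop, f n = m') : m' ≤ m := by
  obtain ⟨n, rfl, hn⟩ := (h'.and_eventually h.2).exists
  exact hn

theorem exists_isMaxFrequentValue {Q : Type} [Fintype Q] (r : ℕ → Q) (c : Q → ℕ) :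
    ∃ m, IsMaxFrequentValue (fun n => c (r n)) m := by
  classical
  let recurrent : Finset Q := Finset.univ.filter fun q => ∃ᶠ n in atTop, r n = q
  obtain ⟨q, hq⟩ :=
    frequently_exists_eq_of_frequently r (p := fun _ => True) (.of_forall fun _ => trivial)
  obtain ⟨qmax, hqmax, hmax⟩ := recurrent.exists_max_image c
    ⟨q, Finset.mem_filter.2 ⟨Finset.mem_univ q, hq.mono fun _ h => h.2⟩⟩
  refine ⟨c qmax, ((Finset.mem_filter.1 hqmax).2.mono fun n hn => congrArg c hn), ?_⟩
  exact (eventually_frequently_eq r).mono fun n hn =>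
    hmax (r n) (Finset.mem_filter.2 ⟨Finset.mem_univ _, hn⟩)

theorem parityAccept_iff {α : Type} {M : DetAuto α} {c : M.Q → ℕ} {x : ℕ → α} {m : ℕ}
    (h : IsMaxFrequentValue (fun n => c (M.run x n)) m) : ParityAccept M c x ↔ Odd m := by
  constructor
  · rintro ⟨m', hodd, hfreq, hmax⟩
    rwa [le_antisymm (hmax m h.1) (h.le_of_frequently hfreq)]
  · exact fun hodd => ⟨m, hodd, h.1, fun _ => h.le_of_frequently⟩

section Loops

variable {α : Type} (M : DetAuto α) (c : M.Q → ℕ)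

def IsMaxColorLoop (q : M.Q) (w : ℕ → α) (k m : ℕ) : Prop :=
  M.runFrom q w k = q ∧ (∀ i ≤ k, c (M.runFrom q w i) ≤ m) ∧
    ∃ i, 0 < i ∧ i ≤ k ∧ c (M.runFrom q w i) = m

variable {M c}

theorem IsMaxColorLoop.pos {q : M.Q} {w : ℕ → α} {k m : ℕ} (h : IsMaxColorLoop M c q w k m) :
    0 < k :=
  let ⟨_, _, _, hi, hik, _⟩ := h
  hi.trans_le hik

theorem IsMaxColorLoop.periodic {q : M.Q} {w : ℕ → α} {k m : ℕ} (h : IsMaxColorLoop M c q w k m)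
    {j : ℕ} (hj : 0 < j) : IsMaxColorLoop M c q (fun i => w (i % k)) (k * j) m := by
  have hk := h.pos
  obtain ⟨hloop, hle, i, hi, hik, hci⟩ := h
  have hrun := M.runFrom_mod hk hloop
  refine ⟨?_, fun i _ => hrun i ▸ hle _ (Nat.mod_lt i hk).le, i, hi,
    hik.trans (Nat.le_mul_of_pos_right k hj), ?_⟩
  · rw [hrun, Nat.mul_mod_right]; rfl
  · rwa [M.runFrom_congr fun i' hi' => congrArg w (Nat.mod_eq_of_lt (hi'.trans_le hik))]

theorem exists_isMaxColorLoop {x : ℕ → α} {q : M.Q} {m : ℕ} (hq : ∃ᶠ n in atTop, M.run x n = q)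
    (hm : IsMaxFrequentValue (fun n => c (M.run x n)) m) : ∃ w k, IsMaxColorLoop M c q w k m := by
  obtain ⟨N, hN⟩ := eventually_atTop.1 hm.2
  obtain ⟨n₁, hn₁N, hn₁⟩ := frequently_atTop.1 hq N
  obtain ⟨n₂, hn₂, hcn₂⟩ := frequently_atTop.1 hm.1 (n₁ + 1)
  obtain ⟨n₃, hn₃, hn₃q⟩ := frequently_atTop.1 hq n₂
  have hshift : ∀ i, M.runFrom q (fun i => x (n₁ + i)) i = M.run x (n₁ + i) := fun i => by
    rw [M.run_add, hn₁]
  refine ⟨fun i => x (n₁ + i), n₃ - n₁, ?_, fun i _ => ?_, n₂ - n₁, by omega, by omega, ?_⟩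
  · rw [hshift, Nat.add_sub_cancel' (by omega), hn₃q]
  · rw [hshift]; exact hN _ (by omega)
  · rw [hshift, Nat.add_sub_cancel' (by omega)]; exact hcn₂

variable (M c)

def HasRefutingLoops : Prop :=
  ∃ q, (∃ x n, M.run x n = q) ∧ ∃ u k₁ m₁ v k₂ m₂, IsMaxColorLoop M c q u k₁ m₁ ∧
    IsMaxColorLoop M c q v k₂ m₂ ∧ Odd m₁ ∧ Even m₂ ∧ m₁ < m₂

def dominantOddStates : Set M.Q :=
  {q | Odd (c q) ∧ ∀ w k m, IsMaxColorLoop M c q w k m → Even m → m ≤ c q}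

theorem parityAccept_iff_frequently_mem_dominantOddStates (hp : ¬HasRefutingLoops M c)
    (x : ℕ → α) : ParityAccept M c x ↔ ∃ᶠ n in atTop, M.run x n ∈ dominantOddStates M c := by
  obtain ⟨m, hm⟩ := exists_isMaxFrequentValue (M.run x) c
  rw [parityAccept_iff hm]
  constructor
  · intro hodd
    obtain ⟨q, hq⟩ := frequently_exists_eq_of_frequently (M.run x) hm.1
    have hqfreq : ∃ᶠ n in atTop, M.run x n = q := hq.mono fun _ h => h.2
    have hcq : c q = m := by obtain ⟨n, hn, rfl⟩ := hq.exists; exact hn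
    have hreach : ∃ x n, M.run x n = q := by obtain ⟨n, hn⟩ := hqfreq.exists; exact ⟨x, n, hn⟩
    obtain ⟨u, k, hu⟩ := exists_isMaxColorLoop hqfreq hm
    refine hqfreq.mono fun n hn => hn ▸ ⟨hcq ▸ hodd, fun v k' m' hv heven => ?_⟩
    exact le_of_not_gt fun hlt =>
      hp ⟨q, hreach, u, k, m, v, k', m', hu, hv, hodd, heven, hcq ▸ hlt⟩
  · intro hfreq
    obtain ⟨q, hq⟩ := frequently_exists_eq_of_frequently (M.run x) hfreq
    have hqfreq : ∃ᶠ n in atTop, M.run x n = q := hq.mono fun _ h => h.2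
    obtain ⟨hqodd, hqmax⟩ : q ∈ dominantOddStates M c := by
      obtain ⟨n, hn, rfl⟩ := hq.exists; exact hn
    have hcq : c q ≤ m := hm.le_of_frequently (hqfreq.mono fun _ h => congrArg c h)
    obtain ⟨w, k, hw⟩ := exists_isMaxColorLoop hqfreq hm
    refine (Nat.even_or_odd m).resolve_left fun heven => ?_
    exact Nat.not_even_iff_odd.2 hqodd (le_antisymm hcq (hqmax w k m hw heven) ▸ heven)

end Loops

theorem DetAuto.run_out_eq_of_step {A α : Type} (M : DetAuto α) (T : Transducer A α)
    (h : T.S → M.Q) (hinit : h T.init = M.init)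
    (hstep : ∀ s a, M.δ (h s) (T.τ (T.ρ s a)) = h (T.ρ s a)) (y : ℕ → A) (n : ℕ) :
    M.run (T.out y) n = h (T.run y n) := by
  induction n with
  | zero => exact hinit.symm
  | succ n ih => rw [DetAuto.run, ih, Transducer.out, Transducer.run, hstep]

theorem Transducer.exists_input_iff_run_out_mem {α : Type} (T : Transducer Bool α)
    (M : DetAuto α) (acc : Set M.Q) :
    ∃ y : ℕ → Bool, ∀ n, y n = true ↔ M.run (T.out y) n ∈ acc := by
  classical
  let step : T.S × M.Q → T.S × M.Q := fun p =>
    let s := T.ρ p.1 (decide (p.2 ∈ acc))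
    (s, M.δ p.2 (T.τ s))
  let z : ℕ → T.S × M.Q := fun n => step^[n] (T.init, M.init)
  let y : ℕ → Bool := fun n => decide ((z n).2 ∈ acc)
  have hz : ∀ n, z (n + 1) = step (z n) := fun n => Function.iterate_succ_apply' step n _
  have hT : ∀ n, T.run y n = (z n).1 := by
    intro n
    induction n with
    | zero => rfl
    | succ n ih => rw [Transducer.run, ih, hz]
  have hM : ∀ n, M.run (T.out y) n = (z n).2 := by
    intro n
    induction n with
    | zero => rfl
    | succ n ih => rw [DetAuto.run, ih, hz, Transducer.out, hT, hz]
  exact ⟨y, fun n => by rw [hM]; exact decide_eq_true_iff⟩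

theorem not_dbwRefuter_of_dbwRecognizable {α : Type} {L : Set (ℕ → α)} (hL : DBWRecognizable L)
    (R : Transducer Bool α) : ¬DBWRefuter L R := by
  intro hR
  obtain ⟨M, acc, hM⟩ := hL
  obtain ⟨y, hy⟩ := R.exists_input_iff_run_out_mem M acc
  have hfreq : (∃ᶠ n in atTop, y n = true) ↔ R.out y ∈ L :=
    (frequently_congr (.of_forall hy)).trans (hM _).symm
  rw [Nat.frequently_atTop_iff_infinite, hR y] at hfreq
  exact iff_not_self hfreq.symm

theorem exists_eq_add_mul_add {n₀ K k₀ n : ℕ} (hK : 0 < K) (hn : n₀ + k₀ * K < n) :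
    ∃ k ≥ k₀, ∃ i, 0 < i ∧ i ≤ K ∧ n = n₀ + k * K + i := by
  refine ⟨(n - n₀ - 1) / K, (Nat.le_div_iff_mul_le hK).2 (by omega), (n - n₀ - 1) % K + 1,
    by omega, Nat.mod_lt _ hK, ?_⟩
  have := Nat.div_add_mod' (n - n₀ - 1) K
  omega

theorem isMaxFrequentValue_of_blocks {f : ℕ → ℕ} {n₀ K m : ℕ} (hK : 0 < K)
    (hle : ∀ᶠ k in atTop, ∀ i, 0 < i → i ≤ K → f (n₀ + k * K + i) ≤ m)
    (hfreq : ∃ᶠ k in atTop, ∃ i, 0 < i ∧ i ≤ K ∧ f (n₀ + k * K + i) = m) :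
    IsMaxFrequentValue f m := by
  constructor
  · refine frequently_atTop.2 fun N => ?_
    obtain ⟨k, hk, i, -, -, hi⟩ := frequently_atTop.1 hfreq N
    have hkK := Nat.le_mul_of_pos_right k hK
    exact ⟨n₀ + k * K + i, by omega, hi⟩
  · obtain ⟨k₀, hk₀⟩ := eventually_atTop.1 hle
    refine eventually_atTop.2 ⟨n₀ + k₀ * K + 1, fun n hn => ?_⟩
    obtain ⟨k, hk, i, hi, hiK, rfl⟩ := exists_eq_add_mul_add hK (Nat.lt_of_succ_le hn)
    exact hk₀ k hk i hi hiK

section Refuter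

variable {α : Type} (x₀ u v : ℕ → α) (n₀ K : ℕ) (hK : 0 < K)

def lassoWord (w : Bool) (j : ℕ) : α :=
  if j < n₀ then x₀ j else cond w v u (j - n₀)

/-- In state `(p, w, f)` the first `p` letters of `lassoWord x₀ u v n₀ w` have been emitted, and
`f` records whether `acc` was read since the current loop began; when the loop is complete the
next one is `v` if `f` holds and `u` otherwise. -/
abbrev loopRefuter : Transducer Bool α where
  S := Fin (n₀ + K + 1) × Bool × Bool
  init := (0, false, false)
  ρ s b :=
    if h : (s.1 : ℕ) < n₀ + K then (⟨s.1 + 1, by omega⟩, s.2.1, s.2.2 || b)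
    else (⟨n₀ + 1, by omega⟩, s.2.2 || b, false)
  τ s := lassoWord x₀ u v n₀ s.2.1 (s.1 - 1)

local notation "R" => loopRefuter x₀ u v n₀ K hK

theorem loopRefuter_ρ_of_lt {s : (R).S} (h : (s.1 : ℕ) < n₀ + K) (b : Bool) :
    (R).ρ s b = (⟨s.1 + 1, by omega⟩, s.2.1, s.2.2 || b) :=
  dif_pos h

theorem loopRefuter_ρ_of_not_lt {s : (R).S} (h : ¬(s.1 : ℕ) < n₀ + K) (b : Bool) :
    (R).ρ s b = (⟨n₀ + 1, by omega⟩, s.2.2 || b, false) :=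
  dif_neg h

variable (y : ℕ → Bool)

theorem loopRefuter_run_fst_of_le : ∀ n ≤ n₀ + 1, (((R).run y n).1 : ℕ) = n
  | 0, _ => rfl
  | n + 1, hn => by
    have ih := loopRefuter_run_fst_of_le n (by omega)
    rw [Transducer.run, loopRefuter_ρ_of_lt _ _ _ _ _ _ (by omega)]
    exact congrArg Nat.succ ih

theorem loopRefuter_run_within {t : ℕ} (hstart : (((R).run y (t + 1)).1 : ℕ) = n₀ + 1) {i : ℕ}
    (hi : 1 ≤ i) (hiK : i ≤ K) :
    (((R).run y (t + i)).1 : ℕ) = n₀ + i ∧ ((R).run y (t + i)).2.1 = ((R).run y (t + 1)).2.1 ∧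
      (((R).run y (t + i)).2.2 = true ↔
        ((R).run y (t + 1)).2.2 = true ∨ ∃ j, 1 ≤ j ∧ j < i ∧ y (t + j) = true) := by
  induction i, hi using Nat.le_induction with
  | base => exact ⟨hstart, rfl, (or_iff_left (by rintro ⟨j, _, _, _⟩; omega)).symm⟩
  | succ i hi ih =>
    obtain ⟨hpos, hkind, hflag⟩ := ih (by omega)
    rw [← Nat.add_assoc, Transducer.run, loopRefuter_ρ_of_lt _ _ _ _ _ _ (by omega)]
    refine ⟨by simp only [hpos]; omega, hkind, ?_⟩
    simp only [Bool.or_eq_true, hflag]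
    constructor
    · rintro ((h | ⟨j, hj, hji, hj'⟩) | h)
      exacts [.inl h, .inr ⟨j, hj, by omega, hj'⟩, .inr ⟨i, hi, by omega, h⟩]
    · rintro (h | ⟨j, hj, hji, hj'⟩)
      · exact .inl (.inl h)
      · rcases Nat.lt_succ_iff_lt_or_eq.1 hji with hji | rfl
        exacts [.inl (.inr ⟨j, hj, hji, hj'⟩), .inr hj']

theorem loopRefuter_run_next {t : ℕ} (hstart : (((R).run y (t + 1)).1 : ℕ) = n₀ + 1) :
    (((R).run y (t + K + 1)).1 : ℕ) = n₀ + 1 ∧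
      (((R).run y (t + K + 1)).2.1 = true ↔
        ((R).run y (t + 1)).2.2 = true ∨ ∃ j, 1 ≤ j ∧ j ≤ K ∧ y (t + j) = true) ∧
      ((R).run y (t + K + 1)).2.2 = false := by
  obtain ⟨hpos, -, hflag⟩ := loopRefuter_run_within x₀ u v n₀ K hK y hstart hK le_rfl
  rw [Transducer.run, loopRefuter_ρ_of_not_lt _ _ _ _ _ _ (by omega)]
  refine ⟨rfl, ?_, rfl⟩
  simp only [Bool.or_eq_true, hflag]
  constructor
  · rintro ((h | ⟨j, hj, hjK, hj'⟩) | h)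
    exacts [.inl h, .inr ⟨j, hj, hjK.le, hj'⟩, .inr ⟨K, hK, le_rfl, h⟩]
  · rintro (h | ⟨j, hj, hjK, hj'⟩)
    · exact .inl (.inl h)
    · rcases hjK.lt_or_eq with hjK | rfl
      exacts [.inl (.inr ⟨j, hj, hjK, hj'⟩), .inr hj']

theorem loopRefuter_run_blockStart (k : ℕ) : (((R).run y (n₀ + k * K + 1)).1 : ℕ) = n₀ + 1 := by
  induction k with
  | zero => simpa using loopRefuter_run_fst_of_le x₀ u v n₀ K hK y _ le_rfl
  | succ k ih =>
    rw [Nat.succ_mul, ← Nat.add_assoc]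
    exact (loopRefuter_run_next x₀ u v n₀ K hK y ih).1

variable {M : DetAuto α} {q : M.Q}

theorem run_lassoWord_add (hx₀ : M.run x₀ n₀ = q) (w : Bool) (i : ℕ) :
    M.run (lassoWord x₀ u v n₀ w) (n₀ + i) = M.runFrom q (cond w v u) i := by
  have hprefix : M.run (lassoWord x₀ u v n₀ w) n₀ = q := by
    rw [← hx₀, M.run_eq_runFrom, M.run_eq_runFrom]
    exact M.runFrom_congr fun j hj => if_pos hj
  rw [M.run_add, hprefix]
  congr 1
  funext j
  simp [lassoWord]

theorem run_loopRefuter_out (hx₀ : M.run x₀ n₀ = q) (hu : M.runFrom q u K = q)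
    (hv : M.runFrom q v K = q) (n : ℕ) :
    M.run ((R).out y) n = M.run (lassoWord x₀ u v n₀ ((R).run y n).2.1) ((R).run y n).1 := by
  refine M.run_out_eq_of_step R (fun s => M.run (lassoWord x₀ u v n₀ s.2.1) s.1) rfl
    (fun s b => ?_) y n
  by_cases h : (s.1 : ℕ) < n₀ + K
  · rw [loopRefuter_ρ_of_lt _ _ _ _ _ _ h]; rfl
  · have hend : M.run (lassoWord x₀ u v n₀ s.2.1) s.1 = q := by
      rw [show (s.1 : ℕ) = n₀ + K by omega, run_lassoWord_add x₀ u v n₀ hx₀]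
      cases s.2.1 <;> assumption
    have hstart (w : Bool) : M.run (lassoWord x₀ u v n₀ w) n₀ = q :=
      run_lassoWord_add x₀ u v n₀ hx₀ w 0
    rw [loopRefuter_ρ_of_not_lt _ _ _ _ _ _ h]
    show M.δ (M.run (lassoWord x₀ u v n₀ s.2.1) s.1) _ =
      M.δ (M.run (lassoWord x₀ u v n₀ (s.2.2 || b)) n₀) _
    rw [hend, hstart]
    rfl

theorem run_loopRefuter_out_block (hx₀ : M.run x₀ n₀ = q) (hu : M.runFrom q u K = q)
    (hv : M.runFrom q v K = q) (k i : ℕ) (hi : 0 < i) (hiK : i ≤ K) :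
    M.run ((R).out y) (n₀ + k * K + i) =
      M.runFrom q (cond ((R).run y (n₀ + k * K + 1)).2.1 v u) i := by
  obtain ⟨hpos, hkind, -⟩ :=
    loopRefuter_run_within x₀ u v n₀ K hK y (loopRefuter_run_blockStart x₀ u v n₀ K hK y k) hi hiK
  rw [run_loopRefuter_out x₀ u v n₀ K hK y hx₀ hu hv, hpos, hkind,
    run_lassoWord_add x₀ u v n₀ hx₀]

theorem loopRefuter_eventually_kind_false (hfin : {j | y j = true}.Finite) :
    ∀ᶠ k in atTop, ((R).run y (n₀ + k * K + 1)).2.1 = false := by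
  obtain ⟨B, hB⟩ := hfin.bddAbove
  refine eventually_atTop.2 ⟨B + 2, fun k hk => ?_⟩
  obtain ⟨k, rfl⟩ : ∃ k', k = k' + 2 := ⟨k - 2, by omega⟩
  have hflag := (loopRefuter_run_next x₀ u v n₀ K hK y
    (loopRefuter_run_blockStart x₀ u v n₀ K hK y k)).2.2
  have hnext := (loopRefuter_run_next x₀ u v n₀ K hK y
    (loopRefuter_run_blockStart x₀ u v n₀ K hK y (k + 1))).2.1
  rw [show n₀ + k * K + K = n₀ + (k + 1) * K by ring] at hflag
  rw [show n₀ + (k + 2) * K = n₀ + (k + 1) * K + K by ring, Bool.eq_false_iff]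
  intro hkind
  rcases hnext.1 hkind with hflag' | ⟨j, hj, -, hyj⟩
  · exact Bool.false_ne_true (hflag ▸ hflag')
  · have := hB hyj
    have := Nat.le_mul_of_pos_right (k + 1) hK
    omega

theorem loopRefuter_frequently_kind_true (hinf : {j | y j = true}.Infinite) :
    ∃ᶠ k in atTop, ((R).run y (n₀ + k * K + 1)).2.1 = true := by
  refine frequently_atTop.2 fun k₀ => ?_
  obtain ⟨j, hyj, hj⟩ := hinf.exists_gt (n₀ + k₀ * K)
  obtain ⟨k, hk, i, hi, hiK, rfl⟩ := exists_eq_add_mul_add hK hj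
  refine ⟨k + 1, by omega, ?_⟩
  rw [Nat.succ_mul, ← Nat.add_assoc]
  exact (loopRefuter_run_next x₀ u v n₀ K hK y
    (loopRefuter_run_blockStart x₀ u v n₀ K hK y k)).2.1.2 (.inr ⟨i, hi, hiK, hyj⟩)

theorem parityAccept_loopRefuter_out_iff (hx₀ : M.run x₀ n₀ = q) {c : M.Q → ℕ} {m₁ m₂ : ℕ}
    (hu : IsMaxColorLoop M c q u K m₁) (hv : IsMaxColorLoop M c q v K m₂) (h₁ : Odd m₁)
    (h₂ : Even m₂) (hlt : m₁ < m₂) :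
    ParityAccept M c ((R).out y) ↔ {j | y j = true}.Finite := by
  have hblock := run_loopRefuter_out_block x₀ u v n₀ K hK y hx₀ hu.1 hv.1
  rcases Set.finite_or_infinite {j | y j = true} with hfin | hinf
  · refine iff_of_true ((parityAccept_iff (m := m₁) ?_).2 h₁) hfin
    have hkind := loopRefuter_eventually_kind_false x₀ u v n₀ K hK y hfin
    obtain ⟨-, hle, i, hi, hiK, hci⟩ := hu
    refine isMaxFrequentValue_of_blocks (n₀ := n₀) hK (hkind.mono fun k hk i hi hiK => ?_)
      (hkind.mono fun k hk => ⟨i, hi, hiK, ?_⟩).frequently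
    · rw [hblock k i hi hiK, hk]; exact hle i hiK
    · rw [hblock k i hi hiK, hk]; exact hci
  · refine iff_of_false (fun hacc => Nat.not_odd_iff_even.2 h₂ ((parityAccept_iff ?_).1 hacc))
      hinf
    obtain ⟨-, hle, i, hi, hiK, hci⟩ := hv
    refine isMaxFrequentValue_of_blocks (n₀ := n₀) hK (.of_forall fun k i hi hiK => ?_)
      ((loopRefuter_frequently_kind_true x₀ u v n₀ K hK y hinf).mono fun k hk => ⟨i, hi, hiK, ?_⟩)
    · rw [hblock k i hi hiK]
      cases ((R).run y (n₀ + k * K + 1)).2.1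
      exacts [(hu.2.1 i hiK).trans hlt.le, hle i hiK]
    · rw [hblock k i hi hiK, hk]; exact hci

end Refuter

theorem exists_dbwRefuter_of_hasRefutingLoops {α : Type} {L : Set (ℕ → α)} {M : DetAuto α}
    {c : M.Q → ℕ} (hM : ∀ x, x ∈ L ↔ ParityAccept M c x) (h : HasRefutingLoops M c) :
    ∃ R, DBWRefuter L R := by
  obtain ⟨q, ⟨x₀, n₀, hx₀⟩, u, k₁, m₁, v, k₂, m₂, hu, hv, h₁, h₂, hlt⟩ := h
  have hK : 0 < k₁ * k₂ := Nat.mul_pos hu.pos hv.pos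
  refine ⟨loopRefuter x₀ (fun i => u (i % k₁)) (fun i => v (i % k₂)) n₀ (k₁ * k₂) hK, fun y => ?_⟩
  rw [hM]
  exact parityAccept_loopRefuter_out_iff _ _ _ _ _ hK y hx₀ (hu.periodic hv.pos)
    (Nat.mul_comm k₂ k₁ ▸ hv.periodic hu.pos) h₁ h₂ hlt

theorem stmt_1_general {Sig : Type} (L : Set (ℕ → Sig)) (hL : OmegaRegular L) :
    Xor' (DBWRecognizable L) (∃ R : Transducer Bool Sig, DBWRefuter L R) := by
  obtain ⟨M, c, hM⟩ := hL
  refine (xor_iff_or_and_not_and _ _).2 ⟨?_, fun ⟨hdbw, R, hR⟩ =>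
    not_dbwRefuter_of_dbwRecognizable hdbw R hR⟩
  by_cases hp : HasRefutingLoops M c
  · exact .inr (exists_dbwRefuter_of_hasRefutingLoops hM hp)
  · exact .inl ⟨M, dominantOddStates M c, fun x =>
      (hM x).trans (parityAccept_iff_frequently_mem_dominantOddStates M c hp x)⟩

/-- For every ω-regular language `L`, exactly one of the following holds:
(1) `L` is DBW-recognizable; (2) there exists a DBW-refuter for `L`. -/
theorem stmt_1 {Sig : Type} [Fintype Sig] (L : Set (ℕ → Sig)) (hL : OmegaRegular L) :
    Xor' (DBWRecognizable L) (∃ R : Transducer Bool Sig, DBWRefuter L R) :=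
  stmt_1_general L hL
end

section
/- Let A be a deterministic parity automaton over Σ with n states and let L = L(A). Then at least one of the following holds: (1) L is recognized by a deterministic Büchi automaton with at most n states; (2) there is a DBW-refuter for L with at most 2n states. -/
/-!
A run of a DPW is accepting iff the maximal color `a` among the states it visits infinitely often
is odd, and these states are linked by paths of colors `≤ a`. Call `(r, p)` an obstruction if `r`
is reachable, of odd color, on a cycle of colors `≤ c r`, and shares a cycle of colors `≤ c p`
with a state `p` of even color `c p > c r`. Without obstructions, `A` itself with the Büchi set of
odd states lying on no such cycle with a larger even state recognizes `L`: if `a` is odd, the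
infinitely visited state of color `a` is in the set; if `a` is even, every infinitely visited odd
state shares a cycle with it.

With an obstruction, the refuter steers `A` towards `p` after each `acc` and back towards `r` once
`p` is seen, remembering only the current state of `A` and this mode bit. Infinitely many `acc`s
bring the run back to `p` forever within colors `≤ c p` (even: rejected); finitely many leave it
cycling through `r` within colors `≤ c r` (odd: accepted).
-/

open Filter Relation

namespace Relation

variable {β : Type*}

def NSteps (r : β → β → Prop) : ℕ → β → β → Prop
  | 0 => Eq
  | n + 1 => fun a b => ∃ c, r a c ∧ NSteps r n c b

variable {r : β → β → Prop}

theorem NSteps.reflTransGen : ∀ {n : ℕ} {a b : β}, NSteps r n a b → ReflTransGen r a b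
  | 0, _, _, rfl => .refl
  | _ + 1, _, _, ⟨_, hac, hcb⟩ => .head hac hcb.reflTransGen

theorem NSteps.transGen {n : ℕ} {a b : β} (h : NSteps r (n + 1) a b) : TransGen r a b :=
  let ⟨_, hac, hcb⟩ := h
  TransGen.head' hac hcb.reflTransGen

theorem TransGen.exists_nSteps {a b : β} (h : TransGen r a b) : ∃ n, NSteps r (n + 1) a b := by
  induction h using TransGen.head_induction_on with
  | single hab => exact ⟨0, _, hab, rfl⟩
  | head hac _ ih =>
    obtain ⟨n, hn⟩ := ih
    exact ⟨n + 1, _, hac, hn⟩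

end Relation

namespace DetAuto

variable {α : Type}

section

variable (M : DetAuto α) (c : M.Q → ℕ)

/-- Only the target's color is bounded, so along a path of `Step b`s every state after the first
has color `≤ b`. -/
def Step (b : ℕ) (s t : M.Q) : Prop := ∃ ℓ, M.δ s ℓ = t ∧ c t ≤ b

def Reachable (q : M.Q) : Prop := ∃ x n, M.run x n = q

structure EvenDominated (r p : M.Q) : Prop where
  even : Even (c p)
  lt : c r < c p
  reach : ReflTransGen (M.Step c (c p)) r p
  reach_back : ReflTransGen (M.Step c (c p)) p r

structure IsObstruction (r p : M.Q) : Prop where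
  reachable : M.Reachable r
  odd : Odd (c r)
  cycle : TransGen (M.Step c (c r)) r r
  dominated : M.EvenDominated c r p

def HasDBWObstruction : Prop := ∃ r p, M.IsObstruction c r p

def buchiSet : Set M.Q := {s | Odd (c s) ∧ ∀ p, ¬ M.EvenDominated c s p}

variable {M c}

theorem step_mono {b b' : ℕ} (h : b ≤ b') : M.Step c b ≤ M.Step c b' :=
  fun _ _ ⟨ℓ, hℓ, hc⟩ => ⟨ℓ, hℓ, hc.trans h⟩

theorem step_sup (s : M.Q) (ℓ : α) : M.Step c (Finset.univ.sup c) s (M.δ s ℓ) :=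
  ⟨ℓ, rfl, Finset.le_sup (Finset.mem_univ _)⟩

theorem Step.le {b : ℕ} {s t : M.Q} (h : M.Step c b s t) : c t ≤ b :=
  let ⟨_, _, hc⟩ := h
  hc

theorem run_succ (x : ℕ → α) (n : ℕ) : M.run x (n + 1) = M.δ (M.run x n) (x n) := rfl

theorem transGen_run {x : ℕ → α} {b n₁ n₂ : ℕ} (hlt : n₁ < n₂)
    (hc : ∀ n, n₁ < n → n ≤ n₂ → c (M.run x n) ≤ b) :
    TransGen (M.Step c b) (M.run x n₁) (M.run x n₂) := by
  induction n₂, hlt using Nat.le_induction with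
  | base => exact .single ⟨x n₁, rfl, hc _ (by omega) le_rfl⟩
  | succ n hn ih =>
    exact (ih fun k hk hkn => hc k hk (by omega)).tail ⟨x n, rfl, hc _ (by omega) le_rfl⟩

theorem Reachable.reflTransGen {q : M.Q} (h : M.Reachable q) :
    ReflTransGen (M.Step c (Finset.univ.sup c)) M.init q := by
  obtain ⟨x, n, rfl⟩ := h
  induction n with
  | zero => exact .refl
  | succ n ih => exact ih.tail (step_sup _ _)

theorem eventually_color_le {x : ℕ → α} {b T : ℕ}
    (h : ∀ n ≥ T, M.Step c b (M.run x n) (M.run x (n + 1))) :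
    ∀ᶠ n in atTop, c (M.run x n) ≤ b := by
  refine eventually_atTop.2 ⟨T + 1, fun n hn => ?_⟩
  obtain ⟨k, rfl⟩ : ∃ k, n = k + 1 := ⟨n - 1, by omega⟩
  exact (h k (by omega)).le

theorem parityAccept_iff_odd {x : ℕ → α} {b : ℕ} (hle : ∀ᶠ n in atTop, c (M.run x n) ≤ b)
    (hb : ∃ᶠ n in atTop, c (M.run x n) = b) : ParityAccept M c x ↔ Odd b := by
  have le_b : ∀ m, (∃ᶠ n in atTop, c (M.run x n) = m) → m ≤ b := fun m hm =>
    let ⟨_, hm, hle⟩ := (hm.and_eventually hle).exists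
    hm ▸ hle
  constructor
  · rintro ⟨m, hodd, hm, hmax⟩
    rwa [(le_b m hm).antisymm (hmax b hb)] at hodd
  · exact fun hodd => ⟨b, hodd, hb, le_b⟩

theorem parityAccept_iff_frequently_mem_buchiSet (h : ¬ M.HasDBWObstruction c) (x : ℕ → α) :
    ParityAccept M c x ↔ ∃ᶠ n in atTop, M.run x n ∈ M.buchiSet c := by
  set I : Set M.Q := {s | ∃ᶠ n in atTop, M.run x n = s}
  have hI : ∀ᶠ n in atTop, M.run x n ∈ I := by
    have : ∀ s, ∀ᶠ n in atTop, M.run x n = s → s ∈ I := fun s => by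
      by_cases hs : s ∈ I
      · exact .of_forall fun _ _ => hs
      · exact (not_frequently.1 hs).mono fun _ hn h => absurd h hn
    exact (eventually_all.2 this).mono fun n hn => hn _ rfl
  obtain ⟨s₀, hs₀, hmax⟩ := Set.exists_max_image I c I.toFinite
    (let ⟨_, hn⟩ := hI.exists; ⟨_, hn⟩)
  have hle : ∀ᶠ n in atTop, c (M.run x n) ≤ c s₀ := hI.mono fun n hn => hmax _ hn
  have hconn : ∀ s ∈ I, ∀ t ∈ I, TransGen (M.Step c (c s₀)) s t := by
    intro s hs t ht
    obtain ⟨N, hN⟩ := eventually_atTop.1 hle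
    obtain ⟨n₁, hn₁, rfl⟩ := frequently_atTop.1 hs N
    obtain ⟨n₂, hn₂, rfl⟩ := frequently_atTop.1 ht (n₁ + 1)
    exact transGen_run (by omega) fun n hn _ => hN n (by omega)
  rw [parityAccept_iff_odd hle (hs₀.mono fun _ hn => by rw [hn])]
  constructor
  · intro hodd
    have hs₀B : s₀ ∈ M.buchiSet c := by
      refine ⟨hodd, fun p hp => h ⟨s₀, p, ?_, hodd, hconn s₀ hs₀ s₀ hs₀, hp⟩⟩
      obtain ⟨n, hn⟩ := hs₀.exists
      exact ⟨x, n, hn⟩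
    exact hs₀.mono fun _ hn => hn ▸ hs₀B
  · intro hfr
    obtain ⟨n, ⟨hodd, hundom⟩, hnI⟩ := (hfr.and_eventually hI).exists
    by_contra heven
    rw [Nat.not_odd_iff_even] at heven
    have hlt : c (M.run x n) < c s₀ :=
      (hmax _ hnI).lt_of_ne fun h => Nat.not_even_iff_odd.2 hodd (h ▸ heven)
    exact hundom s₀ ⟨heven, hlt, (hconn _ hnI _ hs₀).to_reflTransGen,
      (hconn _ hs₀ _ hnI).to_reflTransGen⟩

end

section

variable (M : DetAuto α) (c : M.Q → ℕ)

noncomputable def reachBound (t s : M.Q) : ℕ := sInf {b | TransGen (M.Step c b) s t}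

noncomputable def reachDist (t s : M.Q) : ℕ :=
  sInf {n | NSteps (M.Step c (M.reachBound c t s)) (n + 1) s t}

/-- Starts a nonempty path from `s` to `t` whose maximal color is least and which is shortest
among those; minimizing the color first makes this one letter right for every bound
(`step_toward`). -/
noncomputable def toward [Nonempty α] (t s : M.Q) : α :=
  Classical.epsilon fun ℓ => M.Step c (M.reachBound c t s) s (M.δ s ℓ) ∧
    NSteps (M.Step c (M.reachBound c t s)) (M.reachDist c t s) (M.δ s ℓ) t

variable {M c} [Nonempty α] {t s : M.Q}

theorem toward_spec (h : ∃ b, TransGen (M.Step c b) s t) :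
    M.Step c (M.reachBound c t s) s (M.δ s (M.toward c t s)) ∧
      NSteps (M.Step c (M.reachBound c t s)) (M.reachDist c t s) (M.δ s (M.toward c t s)) t := by
  obtain ⟨k, hk⟩ := (Nat.sInf_mem h).exists_nSteps
  obtain ⟨_, ⟨ℓ, rfl, hc⟩, hrest⟩ := Nat.sInf_mem (s := {n | NSteps _ (n + 1) s t}) ⟨k, hk⟩
  exact Classical.epsilon_spec (p := fun ℓ => M.Step c (M.reachBound c t s) s (M.δ s ℓ) ∧
    NSteps (M.Step c (M.reachBound c t s)) (M.reachDist c t s) (M.δ s ℓ) t) ⟨ℓ, ⟨ℓ, rfl, hc⟩, hrest⟩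

theorem step_toward {b : ℕ} (h : TransGen (M.Step c b) s t) :
    M.Step c b s (M.δ s (M.toward c t s)) ∧
      ReflTransGen (M.Step c b) (M.δ s (M.toward c t s)) t := by
  have hle : M.reachBound c t s ≤ b := Nat.sInf_le h
  obtain ⟨hstep, hpath⟩ := toward_spec ⟨b, h⟩
  exact ⟨step_mono hle _ _ hstep, ReflTransGen.mono (step_mono hle) _ _ hpath.reflTransGen⟩

theorem transGen_toward {b : ℕ} (hcycle : TransGen (M.Step c b) t t)
    (h : ReflTransGen (M.Step c b) s t) :
    M.Step c b s (M.δ s (M.toward c t s)) ∧ TransGen (M.Step c b) (M.δ s (M.toward c t s)) t :=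
  let ⟨hstep, hpath⟩ := step_toward (TransGen.trans_right h hcycle)
  ⟨hstep, TransGen.trans_right hpath hcycle⟩

theorem reachBound_reachDist_toward_lt {b : ℕ} (h : TransGen (M.Step c b) s t)
    (hne : M.δ s (M.toward c t s) ≠ t) :
    Prod.Lex (· < ·) (· < ·)
      (M.reachBound c t (M.δ s (M.toward c t s)), M.reachDist c t (M.δ s (M.toward c t s)))
      (M.reachBound c t s, M.reachDist c t s) := by
  obtain ⟨-, hpath⟩ := toward_spec ⟨b, h⟩
  rcases hk : M.reachDist c t s with _ | k
  · rw [hk] at hpath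
    exact absurd hpath hne
  rw [hk] at hpath
  have hle : M.reachBound c t (M.δ s (M.toward c t s)) ≤ M.reachBound c t s :=
    Nat.sInf_le hpath.transGen
  rcases hle.lt_or_eq with hlt | heq
  · exact .left _ _ hlt
  · rw [heq]
    refine .right _ (Nat.lt_succ_of_le (Nat.sInf_le ?_))
    rw [Set.mem_ofPred_eq, heq]
    exact hpath

theorem exists_iterate_toward_eq {t s : M.Q} {b : ℕ} (h : ReflTransGen (M.Step c b) s t) :
    ∃ K, (fun q => M.δ q (M.toward c t q))^[K] s = t := by
  by_cases hst : s = t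
  · exact ⟨0, hst⟩
  have hs : TransGen (M.Step c b) s t :=
    (reflTransGen_iff_eq_or_transGen.1 h).resolve_left (Ne.symm hst)
  by_cases hne : M.δ s (M.toward c t s) = t
  · exact ⟨1, hne⟩
  have hlt := reachBound_reachDist_toward_lt hs hne
  obtain ⟨K, hK⟩ := exists_iterate_toward_eq (step_toward hs).2
  exact ⟨K + 1, hK⟩
termination_by (M.reachBound c t s, M.reachDist c t s)
decreasing_by exact hlt

end

section

variable (M : DetAuto α) (c : M.Q → ℕ)

structure IsRefuterRun [Nonempty α] (r p : M.Q) (y μ : ℕ → Bool) (x : ℕ → α) : Prop where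
  letter : ∀ j, x j = M.toward c (bif μ j then p else r) (M.run x j)
  mode : ∀ j, μ (j + 1) = true ↔ y (j + 1) = true ∨ μ j = true ∧ M.run x j ≠ p

variable {M c} {r p : M.Q}

theorem IsObstruction.transGen_self (ho : M.IsObstruction c r p) :
    TransGen (M.Step c (c p)) p p :=
  (TransGen.trans_right ho.dominated.reach_back
    (TransGen.mono (step_mono ho.dominated.lt.le) _ _ ho.cycle)).trans_left ho.dominated.reach

variable [Nonempty α] {y μ : ℕ → Bool} {x : ℕ → α}

theorem IsRefuterRun.run_succ (hrun : M.IsRefuterRun c r p y μ x) (j : ℕ) :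
    M.run x (j + 1) = M.δ (M.run x j) (M.toward c (bif μ j then p else r) (M.run x j)) := by
  rw [DetAuto.run_succ, hrun.letter]

theorem IsObstruction.step_run (ho : M.IsObstruction c r p) (hrun : M.IsRefuterRun c r p y μ x)
    {b n : ℕ} (hb : c p ≤ b) (h : ReflTransGen (M.Step c b) (M.run x n) r) :
    M.Step c b (M.run x n) (M.run x (n + 1)) ∧ ReflTransGen (M.Step c b) (M.run x (n + 1)) r := by
  have hrp := ReflTransGen.mono (step_mono hb) _ _ ho.dominated.reach
  have hpr := ReflTransGen.mono (step_mono hb) _ _ ho.dominated.reach_back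
  rw [hrun.run_succ]
  cases μ n
  · obtain ⟨hstep, hpath⟩ :=
      transGen_toward (TransGen.mono (step_mono (ho.dominated.lt.le.trans hb)) _ _ ho.cycle) h
    exact ⟨hstep, hpath.to_reflTransGen⟩
  · obtain ⟨hstep, hpath⟩ :=
      transGen_toward (TransGen.mono (step_mono hb) _ _ ho.transGen_self) (h.trans hrp)
    exact ⟨hstep, hpath.to_reflTransGen.trans hpr⟩

theorem IsObstruction.reflTransGen_run (ho : M.IsObstruction c r p)
    (hrun : M.IsRefuterRun c r p y μ x) (n : ℕ) :
    ReflTransGen (M.Step c (Finset.univ.sup c)) (M.run x n) r := by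
  induction n with
  | zero => exact ho.reachable.reflTransGen
  | succ n ih => exact (ho.step_run hrun (Finset.le_sup (Finset.mem_univ p)) ih).2

theorem IsObstruction.exists_ge_run_eq (ho : M.IsObstruction c r p)
    (hrun : M.IsRefuterRun c r p y μ x) {j : ℕ} (hμ : μ j = true) : ∃ t ≥ j, M.run x t = p := by
  obtain ⟨K, hK⟩ := exists_iterate_toward_eq ((ho.reflTransGen_run hrun j).trans
    (ReflTransGen.mono (step_mono (Finset.le_sup (Finset.mem_univ p))) _ _ ho.dominated.reach))
  induction K generalizing j with
  | zero => exact ⟨j, le_rfl, hK⟩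
  | succ K ih =>
    by_cases hjp : M.run x j = p
    · exact ⟨j, le_rfl, hjp⟩
    have hrun' : M.run x (j + 1) = M.δ (M.run x j) (M.toward c p (M.run x j)) := by
      rw [hrun.run_succ, hμ]; rfl
    rw [Function.iterate_succ_apply] at hK
    obtain ⟨t, ht, htp⟩ := ih ((hrun.mode j).2 (.inr ⟨hμ, hjp⟩)) (by rw [hrun']; exact hK)
    exact ⟨t, by omega, htp⟩

theorem IsObstruction.not_parityAccept (ho : M.IsObstruction c r p)
    (hrun : M.IsRefuterRun c r p y μ x) (hinf : {j | y j = true}.Infinite) :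
    ¬ ParityAccept M c x := by
  have hp : ∃ᶠ n in atTop, M.run x n = p := by
    refine frequently_atTop.2 fun N => ?_
    obtain ⟨j, hj, hjN⟩ := hinf.exists_gt N
    obtain ⟨i, rfl⟩ : ∃ i, j = i + 1 := ⟨j - 1, by omega⟩
    obtain ⟨t, ht, htp⟩ := ho.exists_ge_run_eq hrun ((hrun.mode i).2 (.inl hj))
    exact ⟨t, by omega, htp⟩
  obtain ⟨t₀, ht₀⟩ := hp.exists
  have hreg : ∀ n ≥ t₀, ReflTransGen (M.Step c (c p)) (M.run x n) r := by
    intro n hn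
    induction n, hn using Nat.le_induction with
    | base => exact ht₀ ▸ ho.dominated.reach_back
    | succ n _ ih => exact (ho.step_run hrun le_rfl ih).2
  rw [parityAccept_iff_odd (eventually_color_le fun n hn => (ho.step_run hrun le_rfl (hreg n hn)).1)
    (hp.mono fun _ hn => by rw [hn]), Nat.not_odd_iff_even]
  exact ho.dominated.even

theorem IsObstruction.eventually_mode_false (ho : M.IsObstruction c r p)
    (hrun : M.IsRefuterRun c r p y μ x) (hfin : {j | y j = true}.Finite) :
    ∀ᶠ n in atTop, μ n = false := by
  obtain ⟨N, hN⟩ := eventually_atTop.1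
    (not_frequently.1 (mt Nat.frequently_atTop_iff_infinite.1 hfin.not_infinite))
  have hstay : ∀ T ≥ N, μ T = false → ∀ n ≥ T, μ n = false := by
    intro T hT hμT n hn
    induction n, hn using Nat.le_induction with
    | base => exact hμT
    | succ n hn ih => simpa [ih, hN (n + 1) (by omega)] using hrun.mode n
  cases hμN : μ N
  · exact eventually_atTop.2 ⟨N, hstay N le_rfl hμN⟩
  · obtain ⟨t, ht, htp⟩ := ho.exists_ge_run_eq hrun hμN
    refine eventually_atTop.2 ⟨t + 1, hstay (t + 1) (by omega) ?_⟩
    simpa [htp, hN (t + 1) (by omega)] using hrun.mode t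

theorem IsObstruction.parityAccept (ho : M.IsObstruction c r p)
    (hrun : M.IsRefuterRun c r p y μ x) (hfin : {j | y j = true}.Finite) :
    ParityAccept M c x := by
  obtain ⟨T, hT⟩ := eventually_atTop.1 (ho.eventually_mode_false hrun hfin)
  have hiter : ∀ n ≥ T, ∀ i,
      M.run x (n + i) = (fun q => M.δ q (M.toward c r q))^[i] (M.run x n) := by
    intro n hn i
    induction i with
    | zero => rfl
    | succ i ih =>
      rw [← add_assoc, hrun.run_succ, hT _ (by omega), ih, Function.iterate_succ_apply']
      rfl
  have hr : ∃ᶠ n in atTop, M.run x n = r := frequently_atTop.2 fun N => by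
    obtain ⟨K, hK⟩ := exists_iterate_toward_eq (ho.reflTransGen_run hrun (max N T))
    exact ⟨max N T + K, by omega, (hiter _ (le_max_right _ _) K).trans hK⟩
  obtain ⟨t₁, ht₁T, ht₁⟩ := frequently_atTop.1 hr T
  have hstep : ∀ n ≥ t₁, ReflTransGen (M.Step c (c r)) (M.run x n) r →
      M.Step c (c r) (M.run x n) (M.run x (n + 1)) ∧
        TransGen (M.Step c (c r)) (M.run x (n + 1)) r := by
    intro n hn h
    rw [hrun.run_succ, hT n (by omega)]
    exact transGen_toward ho.cycle h
  have hreg : ∀ n ≥ t₁, ReflTransGen (M.Step c (c r)) (M.run x n) r := by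
    intro n hn
    induction n, hn using Nat.le_induction with
    | base => exact ht₁ ▸ .refl
    | succ n hn ih => exact (hstep n hn ih).2.to_reflTransGen
  rw [parityAccept_iff_odd (eventually_color_le fun n hn => (hstep n hn (hreg n hn)).1)
    (hr.mono fun _ hn => by rw [hn])]
  exact ho.odd

theorem IsObstruction.parityAccept_iff_finite (ho : M.IsObstruction c r p)
    (hrun : M.IsRefuterRun c r p y μ x) :
    ParityAccept M c x ↔ {j | y j = true}.Finite :=
  ⟨fun hacc => by_contra fun hinf => ho.not_parityAccept hrun hinf hacc,
    ho.parityAccept hrun⟩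

end

section

variable (M : DetAuto α) (c : M.Q → ℕ)

theorem exists_transducer_of_policy (pol : Bool → M.Q → α) (upd : M.Q → Bool → Bool → Bool) :
    ∃ R : Transducer Bool α, Fintype.card R.S = 2 * Fintype.card M.Q ∧ ∀ y, ∃ μ : ℕ → Bool,
      (∀ j, R.out y j = pol (μ j) (M.run (R.out y) j)) ∧
        ∀ j, μ (j + 1) = upd (M.run (R.out y) j) (μ j) (y (j + 1)) := by
  classical
  let next (s : M.Q × Bool) (b : Bool) : M.Q × Bool := (M.δ s.1 (pol s.2 s.1), upd s.1 s.2 b)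
  let R (s₀ : M.Q × Bool) (ρ : M.Q × Bool → Bool → M.Q × Bool) : Transducer Bool α :=
    ⟨M.Q × Bool, s₀, ρ, fun s => pol s.2 s.1⟩
  suffices ∃ s₀ ρ, (∀ y, ((R s₀ ρ).run y 1).1 = M.init) ∧
      ∀ y j, (R s₀ ρ).run y (j + 2) = next ((R s₀ ρ).run y (j + 1)) (y (j + 1)) by
    obtain ⟨s₀, ρ, hinit, hnext⟩ := this
    refine ⟨R s₀ ρ, by simp [R, mul_comm], fun y => ⟨fun j => ((R s₀ ρ).run y (j + 1)).2, ?_⟩⟩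
    have hstate : ∀ j, ((R s₀ ρ).run y (j + 1)).1 = M.run ((R s₀ ρ).out y) j := by
      intro j
      induction j with
      | zero => exact hinit y
      | succ j ih => rw [hnext, run_succ, ← ih]; rfl
    refine ⟨fun j => ?_, fun j => ?_⟩
    · rw [← hstate]; rfl
    · show ((R s₀ ρ).run y (j + 2)).2 = _
      rw [hnext, ← hstate]
  -- The first letter is output at `s₁`, so `s₁` must already sit at `M.init`: start from a
  -- predecessor of `M.init` if there is one, otherwise from a copy of `M.init` never re-entered.
  by_cases hpred : ∃ s, (next s false).1 = M.init
  · obtain ⟨s₀, hs₀⟩ := hpred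
    exact ⟨s₀, next, fun _ => hs₀, fun _ _ => rfl⟩
  · let ρ (s : M.Q × Bool) (b : Bool) : M.Q × Bool :=
      if s = (M.init, true) then (M.init, false) else next s b
    have hρ : ∀ s b, ρ s b ≠ (M.init, true) := by
      intro s b
      by_cases hs : s = (M.init, true)
      · simp [ρ, hs]
      · simp only [ρ, hs, if_false]
        exact fun h => hpred ⟨s, congrArg Prod.fst h⟩
    exact ⟨(M.init, true), ρ, fun y => by simp [R, ρ, Transducer.run], fun y j => if_neg (hρ _ _)⟩

theorem exists_dbwRefuter (h : M.HasDBWObstruction c) :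
    ∃ R : Transducer Bool α, Fintype.card R.S ≤ 2 * Fintype.card M.Q ∧
      DBWRefuter {x | ParityAccept M c x} R := by
  classical
  obtain ⟨r, p, ho⟩ := h
  obtain ⟨_, ⟨ℓ, -⟩, -⟩ := TransGen.head'_iff.1 ho.cycle
  have : Nonempty α := ⟨ℓ⟩
  obtain ⟨R, hcard, hR⟩ := M.exists_transducer_of_policy
    (fun m q => M.toward c (bif m then p else r) q) (fun q m b => b || (m && !decide (q = p)))
  refine ⟨R, hcard.le, fun y => ?_⟩
  obtain ⟨μ, hx, hμ⟩ := hR y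
  exact ho.parityAccept_iff_finite ⟨hx, fun j => by simp [hμ j]⟩

end

end DetAuto

theorem stmt_2_general {Sig : Type} (M : DetAuto Sig) (c : M.Q → ℕ) (n : ℕ)
    (hn : Fintype.card M.Q = n)
    (L : Set (ℕ → Sig)) (hL : ∀ x, x ∈ L ↔ ParityAccept M c x) :
    (∃ (B : DetAuto Sig) (acc : Set B.Q), Fintype.card B.Q ≤ n ∧
        ∀ x, x ∈ L ↔ ∃ᶠ m in Filter.atTop, B.run x m ∈ acc) ∨
    (∃ R : Transducer Bool Sig, Fintype.card R.S ≤ 2 * n ∧ DBWRefuter L R) := by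
  obtain rfl : L = {x | ParityAccept M c x} := Set.ext hL
  subst hn
  by_cases h : M.HasDBWObstruction c
  · exact .inr (M.exists_dbwRefuter c h)
  · exact .inl ⟨M, M.buchiSet c, le_rfl, DetAuto.parityAccept_iff_frequently_mem_buchiSet h⟩

/-- For a DPW with `n` states recognizing `L`: either a DBW with at most `n` states
recognizes `L`, or there is a DBW-refuter for `L` with at most `2n` states. -/
theorem stmt_2 {Sig : Type} [Fintype Sig] (M : DetAuto Sig) (c : M.Q → ℕ) (n : ℕ)
    (hn : Fintype.card M.Q = n)
    (L : Set (ℕ → Sig)) (hL : ∀ x, x ∈ L ↔ ParityAccept M c x) :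
    (∃ (B : DetAuto Sig) (acc : Set B.Q), Fintype.card B.Q ≤ n ∧
        ∀ x, x ∈ L ↔ ∃ᶠ m in Filter.atTop, B.run x m ∈ acc) ∨
    (∃ R : Transducer Bool Sig, Fintype.card R.S ≤ 2 * n ∧ DBWRefuter L R) :=
  stmt_2_general M c n hn L hL
end

section
/- An ω-regular language L ⊆ Σ^ω is not DBW-recognizable if and only if there exist finite words x ∈ Σ* and x₁, x₂ ∈ Σ⁺ such that x·(x₁+x₂)*·x₁^ω ⊆ L and x·(x₁*·x₂)^ω ∩ L = ∅. -/
/-- `u` is a prefix of the infinite word `w`. -/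
def HasPrefixWord {α : Type} (w : ℕ → α) (u : List α) : Prop :=
  ∀ i : Fin u.length, w i.1 = u.get i

/-- The ω-language `x·(x₁+x₂)*·x₁^ω`. -/
def LangA {α : Type} (x x₁ x₂ : List α) : Set (ℕ → α) :=
  { w | ∃ ws : List (List α), (∀ u ∈ ws, u = x₁ ∨ u = x₂) ∧
        ∀ n, HasPrefixWord w (x ++ ws.flatten ++ (List.replicate n x₁).flatten) }

/-- The ω-language `x·(x₁*·x₂)^ω`. -/
def LangB {α : Type} (x x₁ x₂ : List α) : Set (ℕ → α) :=
  { w | ∃ j : ℕ → ℕ, ∀ n, HasPrefixWord w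
        (x ++ ((List.range n).map (fun i => (List.replicate (j i) x₁).flatten ++ x₂)).flatten) }


/-!
Fix a deterministic parity automaton `(M, c)` for `L`. The obstruction to Büchi recognizability
is a reachable state `q` with two loops `u`, `v` whose largest colors are odd and even, the even
one larger. Given such loops, every word of `x·(u+v)*·u^ω` has the dominant color of `u`, and every
word of `x·(u*·v)^ω` that of `v`. Without them, take as Büchi states those all of whose loops have
odd largest color: the dominant color of a run is the largest color of some loop at each state the
run visits infinitely often.

Conversely, given a Büchi automaton for `L`, after each prefix in `x·(u+v)*` pump `u` until an
accepting state is visited and then append `v`. The limit word lies in `x·(u*·v)^ω` and is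
accepted.
-/

open Filter

theorem Filter.eventually_frequently_eq_of_finite {ι β : Type*} [Finite β] {l : Filter ι}
    (r : ι → β) : ∀ᶠ n in l, ∃ᶠ k in l, r k = r n := by
  have h : ∀ b, ∀ᶠ n in l, r n = b → ∃ᶠ k in l, r k = b := fun b => by
    by_cases hb : ∃ᶠ k in l, r k = b
    · exact Eventually.of_forall fun _ _ => hb
    · exact (not_frequently.1 hb).mono fun n hn hnb => absurd hnb hn
  exact (eventually_all.2 h).mono fun n hn => hn _ rfl

theorem Filter.exists_frequently_eq_eventually_le {ι β : Type*} [Finite β] {l : Filter ι}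
    [l.NeBot] (r : ι → β) (f : β → ℕ) :
    ∃ b, (∃ᶠ n in l, r n = b) ∧ ∀ᶠ n in l, f (r n) ≤ f b := by
  have hfreq := eventually_frequently_eq_of_finite (l := l) r
  obtain ⟨n, hn⟩ := hfreq.exists
  obtain ⟨b, hb, hmax⟩ := Set.exists_max_image {b | ∃ᶠ k in l, r k = b} f (Set.toFinite _) ⟨r n, hn⟩
  exact ⟨b, hb, hfreq.mono fun n hn => hmax (r n) hn⟩

theorem StrictMono.exists_lt_le_succ {P : ℕ → ℕ} (hP : StrictMono P) {n : ℕ} (hn : P 0 < n) :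
    ∃ i, P i < n ∧ n ≤ P (i + 1) := by
  induction n, hn using Nat.le_induction with
  | base => exact ⟨0, Nat.lt_succ_self _, hP Nat.zero_lt_one⟩
  | succ n hn ih =>
    obtain ⟨i, hlt, hle⟩ := ih
    rcases hle.lt_or_eq with hle | rfl
    · exact ⟨i, by omega, hle⟩
    · exact ⟨i + 1, Nat.lt_succ_self _, hP (Nat.lt_succ_self _)⟩

section Words

variable {α : Type}

theorem HasPrefixWord.map_range_eq {w : ℕ → α} {u : List α} (h : HasPrefixWord w u) {i : ℕ}
    (hi : i ≤ u.length) : (List.range i).map w = u.take i :=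
  List.ext_getElem (by simp [hi]) fun k _ hk => by
    simp only [List.getElem_map, List.getElem_range, List.getElem_take]
    exact h ⟨k, by simp at hk; omega⟩

theorem HasPrefixWord.of_prefix {w : ℕ → α} {u v : List α} (h : HasPrefixWord w u)
    (hvu : v <+: u) : HasPrefixWord w v := fun ⟨i, hi⟩ => by
  simpa [hvu.getElem hi] using h ⟨i, hi.trans_le hvu.length_le⟩

theorem exists_hasPrefixWord_of_chain (Y : ℕ → List α) (hY : ∀ n, Y n <+: Y (n + 1))
    (hlen : ∀ n, n ≤ (Y n).length) : ∃ w : ℕ → α, ∀ n, HasPrefixWord w (Y n) := by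
  have hmono : ∀ {a b}, a ≤ b → Y a <+: Y b := by
    intro a b hab
    induction b, hab using Nat.le_induction with
    | base => exact List.prefix_refl _
    | succ b _ ih => exact ih.trans (hY b)
  refine ⟨fun i => (Y (i + 1))[i]'(hlen (i + 1)), fun n ⟨i, hi⟩ => ?_⟩
  rcases le_total (i + 1) n with h | h
  · exact (hmono h).getElem _
  · exact ((hmono h).getElem hi).symm

theorem le_length_append_flatten_replicate (y : List α) {u : List α} (hu : u ≠ []) (n : ℕ) :
    n ≤ (y ++ (List.replicate n u).flatten).length := by
  have := List.length_pos_iff.2 hu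
  simp only [List.length_append, List.length_flatten, List.map_replicate, List.sum_replicate,
    smul_eq_mul]
  nlinarith

theorem exists_hasPrefixWord_append_flatten_replicate (y : List α) {u : List α} (hu : u ≠ []) :
    ∃ w : ℕ → α, ∀ n, HasPrefixWord w (y ++ (List.replicate n u).flatten) := by
  refine exists_hasPrefixWord_of_chain _ (fun n => ?_) (le_length_append_flatten_replicate y hu)
  rw [List.replicate_succ', List.flatten_append, List.flatten_singleton, ← List.append_assoc]
  exact List.prefix_append _ _

end Words

namespace DetAuto

variable {α : Type} (M : DetAuto α)

def evalFrom (q : M.Q) (l : List α) : M.Q := l.foldl M.δ q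

def eval (l : List α) : M.Q := M.evalFrom M.init l

@[simp] theorem evalFrom_nil (q : M.Q) : M.evalFrom q [] = q := rfl

@[simp] theorem evalFrom_cons (q : M.Q) (a : α) (l : List α) :
    M.evalFrom q (a :: l) = M.evalFrom (M.δ q a) l := rfl

theorem evalFrom_append (q : M.Q) (l₁ l₂ : List α) :
    M.evalFrom q (l₁ ++ l₂) = M.evalFrom (M.evalFrom q l₁) l₂ := List.foldl_append

theorem eval_append (l₁ l₂ : List α) : M.eval (l₁ ++ l₂) = M.evalFrom (M.eval l₁) l₂ :=
  M.evalFrom_append _ l₁ l₂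

theorem evalFrom_flatten_of_forall_loop {q : M.Q} {ws : List (List α)}
    (h : ∀ u ∈ ws, M.evalFrom q u = q) : M.evalFrom q ws.flatten = q := by
  induction ws with
  | nil => rfl
  | cons u ws ih =>
    rw [List.flatten_cons, evalFrom_append, h u List.mem_cons_self]
    exact ih fun v hv => h v (List.mem_cons_of_mem _ hv)

theorem evalFrom_flatten_replicate {q : M.Q} {u : List α} (h : M.evalFrom q u = q) (k : ℕ) :
    M.evalFrom q (List.replicate k u).flatten = q :=
  M.evalFrom_flatten_of_forall_loop fun _ hv => List.eq_of_mem_replicate hv ▸ h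

theorem run_add_s5 (w : ℕ → α) (a k : ℕ) :
    M.run w (a + k) = M.evalFrom (M.run w a) ((List.range k).map fun i => w (a + i)) := by
  induction k with
  | zero => rfl
  | succ k ih =>
    rw [List.range_succ, List.map_append, evalFrom_append, ← ih]
    rfl

theorem run_eq_eval (w : ℕ → α) (n : ℕ) : M.run w n = M.eval ((List.range n).map w) := by
  simpa [eval, DetAuto.run] using M.run_add_s5 w 0 n

theorem _root_.HasPrefixWord.run_eq {w : ℕ → α} {u : List α} (h : HasPrefixWord w u) {i : ℕ}
    (hi : i ≤ u.length) : M.run w i = M.eval (u.take i) := by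
  rw [run_eq_eval, h.map_range_eq hi]

variable (c : M.Q → ℕ)

def maxColor : M.Q → List α → ℕ
  | _, [] => 0
  | q, a :: l => max (c (M.δ q a)) (maxColor (M.δ q a) l)

theorem maxColor_append (q : M.Q) (l₁ l₂ : List α) :
    M.maxColor c q (l₁ ++ l₂) = max (M.maxColor c q l₁) (M.maxColor c (M.evalFrom q l₁) l₂) := by
  induction l₁ generalizing q with
  | nil => simp [maxColor]
  | cons a l ih => simp [maxColor, ih, max_assoc]

theorem le_maxColor_take (q : M.Q) {l : List α} {t : ℕ} (ht : 1 ≤ t) (htl : t ≤ l.length) :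
    c (M.evalFrom q (l.take t)) ≤ M.maxColor c q l := by
  induction l generalizing q t with
  | nil => simp at htl; omega
  | cons a l ih =>
    obtain ⟨t, rfl⟩ : ∃ s, t = s + 1 := ⟨t - 1, by omega⟩
    rcases Nat.eq_zero_or_pos t with rfl | ht
    · simp [maxColor]
    · simpa [maxColor] using Or.inr (ih (M.δ q a) ht (by simpa using htl))

theorem exists_take_eq_maxColor (q : M.Q) {l : List α} (hl : l ≠ []) :
    ∃ t, 1 ≤ t ∧ t ≤ l.length ∧ c (M.evalFrom q (l.take t)) = M.maxColor c q l := by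
  induction l generalizing q with
  | nil => exact absurd rfl hl
  | cons a l ih =>
    by_cases ha : M.maxColor c (M.δ q a) l ≤ c (M.δ q a)
    · exact ⟨1, le_rfl, by simp, by simp [maxColor, ha]⟩
    · have hl : l ≠ [] := by rintro rfl; simp [maxColor] at ha
      obtain ⟨t, ht, htl, heq⟩ := ih (M.δ q a) hl
      exact ⟨t + 1, by omega, by simpa using htl, by simp [maxColor, heq]; omega⟩

theorem le_maxColor (q : M.Q) {l : List α} (hl : l ≠ []) :
    c (M.evalFrom q l) ≤ M.maxColor c q l := by
  simpa using M.le_maxColor_take c q (List.length_pos_iff.2 hl) le_rfl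

theorem maxColor_flatten_replicate_le {q : M.Q} {u : List α} (h : M.evalFrom q u = q) (k : ℕ) :
    M.maxColor c q (List.replicate k u).flatten ≤ M.maxColor c q u := by
  induction k with
  | zero => simp [maxColor]
  | succ k ih => simpa [List.replicate_succ, maxColor_append, h] using ih

theorem maxColor_run (w : ℕ → α) (a k : ℕ) :
    M.maxColor c (M.run w a) ((List.range k).map fun i => w (a + i)) =
      (Finset.Ioc a (a + k)).sup (c ∘ M.run w) := by
  induction k with
  | zero => simp [maxColor]
  | succ k ih =>
    rw [List.range_succ, List.map_append, maxColor_append, ih, ← M.run_add_s5,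
      ← add_assoc, ← Finset.insert_Ioc_right_eq_Ioc_add_one (by omega), Finset.sup_insert]
    simp [maxColor, max_comm]
    rfl

theorem parityAccept_iff_of_dominant {w : ℕ → α} {m : ℕ}
    (hdom : ∀ᶠ n in atTop, c (M.run w n) ≤ m) (hfreq : ∃ᶠ n in atTop, c (M.run w n) = m) :
    ParityAccept M c w ↔ Odd m := by
  have hle : ∀ m', (∃ᶠ n in atTop, c (M.run w n) = m') → m' ≤ m := fun m' h' => by
    obtain ⟨n, hn, hnm⟩ := (h'.and_eventually hdom).exists
    exact hn ▸ hnm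
  constructor
  · rintro ⟨m', hodd, hfreq', hmax⟩
    rwa [le_antisymm (hle m' hfreq') (hmax m hfreq)] at hodd
  · exact fun hodd => ⟨m, hodd, hfreq, hle⟩

theorem parityAccept_iff_of_loops {w : ℕ → α} {p : List α} {y : ℕ → List α} {m : ℕ}
    (hpre : ∀ n, HasPrefixWord w (p ++ ((List.range n).map y).flatten))
    (hne : ∀ i, y i ≠ []) (hloop : ∀ i, M.evalFrom (M.eval p) (y i) = M.eval p)
    (hmax : ∀ i, M.maxColor c (M.eval p) (y i) = m) :
    ParityAccept M c w ↔ Odd m := by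
  set B : ℕ → List α := fun n => p ++ ((List.range n).map y).flatten
  have hB : ∀ n, B (n + 1) = B n ++ y n := fun n => by simp [B, List.range_succ]
  have hpreB : ∀ n, HasPrefixWord w (B n) := hpre
  have hevalB : ∀ n, M.eval (B n) = M.eval p := fun n => by
    induction n with
    | zero => simp [B]
    | succ n ih => rw [hB, eval_append, ih, hloop]
  have hrun : ∀ i t, t ≤ (y i).length →
      M.run w ((B i).length + t) = M.evalFrom (M.eval p) ((y i).take t) := fun i t ht => by
    rw [(hpreB (i + 1)).run_eq M (by simp [hB, ht]), hB,
      List.take_length_add_append, eval_append, hevalB]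
  have hmono : StrictMono fun i => (B i).length := strictMono_nat_of_lt_succ fun i => by
    simp [hB, List.length_pos_iff.2 (hne i)]
  apply parityAccept_iff_of_dominant
  · filter_upwards [eventually_gt_atTop (B 0).length] with n hn
    obtain ⟨i, hlt, hle⟩ := hmono.exists_lt_le_succ hn
    obtain ⟨t, rfl⟩ : ∃ t, n = (B i).length + t := ⟨n - (B i).length, by omega⟩
    have ht : t ≤ (y i).length := by simp only [hB, List.length_append] at hle; omega
    rw [hrun i t ht, ← hmax i]
    exact M.le_maxColor_take c _ (by omega) ht
  · refine frequently_atTop.2 fun N => ?_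
    obtain ⟨t, -, ht, heq⟩ := M.exists_take_eq_maxColor c (M.eval p) (hne N)
    exact ⟨(B N).length + t, (hmono.id_le N).trans (Nat.le_add_right _ _), by
      rw [hrun N t ht, heq, hmax]⟩

theorem parityAccept_iff_of_mem_langA {x u v : List α} {w : ℕ → α} (hu : u ≠ [])
    (huloop : M.evalFrom (M.eval x) u = M.eval x) (hvloop : M.evalFrom (M.eval x) v = M.eval x)
    (hw : w ∈ LangA x u v) : ParityAccept M c w ↔ Odd (M.maxColor c (M.eval x) u) := by
  obtain ⟨ws, hws, hpre⟩ := hw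
  have hp : M.eval (x ++ ws.flatten) = M.eval x := by
    rw [eval_append, M.evalFrom_flatten_of_forall_loop]
    intro b hb
    rcases hws b hb with rfl | rfl <;> assumption
  rw [← hp] at huloop ⊢
  exact M.parityAccept_iff_of_loops c (y := fun _ => u) (by simpa [List.map_const'] using hpre)
    (fun _ => hu) (fun _ => huloop) (fun _ => rfl)

theorem parityAccept_iff_of_mem_langB {x u v : List α} {w : ℕ → α} (hv : v ≠ [])
    (huloop : M.evalFrom (M.eval x) u = M.eval x) (hvloop : M.evalFrom (M.eval x) v = M.eval x)
    (hle : M.maxColor c (M.eval x) u ≤ M.maxColor c (M.eval x) v) (hw : w ∈ LangB x u v) :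
    ParityAccept M c w ↔ Odd (M.maxColor c (M.eval x) v) := by
  obtain ⟨j, hpre⟩ := hw
  refine M.parityAccept_iff_of_loops c hpre (fun _ => by simp [hv]) (fun i => ?_) (fun i => ?_)
  · rw [evalFrom_append, M.evalFrom_flatten_replicate huloop, hvloop]
  · rw [maxColor_append, M.evalFrom_flatten_replicate huloop]
    exact max_eq_right ((M.maxColor_flatten_replicate_le c huloop _).trans hle)

structure IsOddEvenLoopPair (q : M.Q) (u v : List α) : Prop where
  left_ne_nil : u ≠ []
  right_ne_nil : v ≠ []
  left_loop : M.evalFrom q u = q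
  right_loop : M.evalFrom q v = q
  odd_left : Odd (M.maxColor c q u)
  even_right : Even (M.maxColor c q v)
  left_lt_right : M.maxColor c q u < M.maxColor c q v

theorem langA_subset_and_langB_inter_eq_empty {L : Set (ℕ → α)}
    (hMc : ∀ w, w ∈ L ↔ ParityAccept M c w) {x u v : List α}
    (h : M.IsOddEvenLoopPair c (M.eval x) u v) : LangA x u v ⊆ L ∧ LangB x u v ∩ L = ∅ := by
  refine ⟨fun w hw => ?_, Set.eq_empty_of_forall_notMem fun w ⟨hw, hwL⟩ => ?_⟩
  · rw [hMc, M.parityAccept_iff_of_mem_langA c h.left_ne_nil h.left_loop h.right_loop hw]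
    exact h.odd_left
  · rw [hMc, M.parityAccept_iff_of_mem_langB c h.right_ne_nil h.left_loop h.right_loop
      h.left_lt_right.le hw] at hwL
    exact Nat.not_odd_iff_even.2 h.even_right hwL

/-- A loop cut out of the run between two visits of `q` that enclose a visit of color `m`. -/
theorem exists_loop_maxColor_eq (w : ℕ → α) {q : M.Q} {m : ℕ}
    (hdom : ∀ᶠ n in atTop, c (M.run w n) ≤ m) (hm : ∃ᶠ n in atTop, c (M.run w n) = m)
    (hq : ∃ᶠ n in atTop, M.run w n = q) :
    ∃ y ≠ [], M.evalFrom q y = q ∧ M.maxColor c q y = m := by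
  obtain ⟨N, hN⟩ := eventually_atTop.1 hdom
  obtain ⟨a, ha, rfl⟩ := frequently_atTop.1 hq N
  obtain ⟨b, hb, hbm⟩ := frequently_atTop.1 hm (a + 1)
  obtain ⟨d, hd, hda⟩ := frequently_atTop.1 hq b
  obtain ⟨k, rfl⟩ : ∃ k, d = a + k := ⟨d - a, by omega⟩
  refine ⟨(List.range k).map fun i => w (a + i), by simp; omega, by rw [← run_add_s5, hda], ?_⟩
  rw [maxColor_run]
  refine le_antisymm (Finset.sup_le fun n hn => hN n ?_)
    (hbm ▸ Finset.le_sup (f := c ∘ M.run w) ?_)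
  · simp only [Finset.mem_Ioc] at hn; omega
  · simp only [Finset.mem_Ioc]; omega

theorem dbwRecognizable_of_forall_not_isOddEvenLoopPair {L : Set (ℕ → α)}
    (hMc : ∀ w, w ∈ L ↔ ParityAccept M c w)
    (h : ∀ x u v, ¬ M.IsOddEvenLoopPair c (M.eval x) u v) : DBWRecognizable L := by
  refine ⟨M, {q | ∀ y, y ≠ [] → M.evalFrom q y = q → Odd (M.maxColor c q y)}, fun w => ?_⟩
  obtain ⟨q, hq, hdom⟩ := exists_frequently_eq_eventually_le (l := atTop) (M.run w) c
  have hm : ∃ᶠ n in atTop, c (M.run w n) = c q := hq.mono fun n hn => by rw [hn]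
  rw [hMc, M.parityAccept_iff_of_dominant c hdom hm]
  constructor
  · intro hodd
    refine hq.mono fun n hn => hn ▸ fun y hy hyloop => ?_
    by_contra hyodd
    obtain ⟨u, hu, huloop, hu_eq⟩ := M.exists_loop_maxColor_eq c w hdom hm hq
    obtain ⟨n, hn⟩ := hq.exists
    have hle := M.le_maxColor c q hy
    rw [hyloop] at hle
    refine h ((List.range n).map w) u y ?_
    rw [← run_eq_eval, hn]
    refine ⟨hu, hy, huloop, hyloop, hu_eq ▸ hodd, Nat.not_odd_iff_even.1 hyodd,
      hu_eq ▸ hle.lt_of_ne fun heq => hyodd (heq ▸ hodd)⟩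
  · intro hacc
    obtain ⟨n, hn, hfreq⟩ := 
      (hacc.and_eventually (eventually_frequently_eq_of_finite (M.run w))).exists
    obtain ⟨u, hu, huloop, hu_eq⟩ := M.exists_loop_maxColor_eq c w hdom hm hfreq
    exact hu_eq ▸ hn u hu huloop

def LoopWords (x u v : List α) : Set (List α) :=
  {y | ∃ ws : List (List α), (∀ b ∈ ws, b = u ∨ b = v) ∧ y = x ++ ws.flatten}

theorem append_flatten_replicate_append_mem_loopWords {x u v y : List α}
    (hy : y ∈ LoopWords x u v) (k : ℕ) :
    y ++ (List.replicate k u).flatten ++ v ∈ LoopWords x u v := by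
  obtain ⟨ws, hws, rfl⟩ := hy
  refine ⟨ws ++ List.replicate k u ++ [v], fun b hb => ?_, by simp⟩
  simp only [List.mem_append, List.mem_singleton] at hb
  rcases hb with (hb | hb) | hb
  · exact hws b hb
  · exact Or.inl (List.eq_of_mem_replicate hb)
  · exact Or.inr hb

theorem exists_visit_flatten_replicate (acc : Set M.Q)
    {y u : List α} (hu : u ≠ [])
    (h : ∀ w, (∀ n, HasPrefixWord w (y ++ (List.replicate n u).flatten)) →
      ∃ᶠ n in atTop, M.run w n ∈ acc) :
    ∃ k t, y.length < t ∧ t ≤ (y ++ (List.replicate k u).flatten).length ∧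
      M.eval ((y ++ (List.replicate k u).flatten).take t) ∈ acc := by
  obtain ⟨w, hw⟩ := exists_hasPrefixWord_append_flatten_replicate y hu
  obtain ⟨t, ht, htacc⟩ := frequently_atTop.1 (h w hw) (y.length + 1)
  have htlen := le_length_append_flatten_replicate y hu t
  exact ⟨t, t, ht, htlen, (hw t).run_eq M htlen ▸ htacc⟩

/-- After each `y ∈ x·(u+v)*`, pump `u` until the next accepting visit, then append `v`. -/
theorem exists_mem_langB_frequently_mem (acc : Set M.Q) {x u v : List α} (hv : v ≠ [])
    (h : ∀ y ∈ LoopWords x u v, ∃ k t, y.length < t ∧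
      t ≤ (y ++ (List.replicate k u).flatten).length ∧
      M.eval ((y ++ (List.replicate k u).flatten).take t) ∈ acc) :
    ∃ W ∈ LangB x u v, ∃ᶠ n in atTop, M.run W n ∈ acc := by
  have hstep : ∀ y, ∃ k, y ∈ LoopWords x u v → ∃ t, y.length < t ∧
      t ≤ (y ++ (List.replicate k u).flatten).length ∧
      M.eval ((y ++ (List.replicate k u).flatten).take t) ∈ acc := fun y => by
    by_cases hy : y ∈ LoopWords x u v
    · obtain ⟨k, t, ht⟩ := h y hy
      exact ⟨k, fun _ => ⟨t, ht⟩⟩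
    · exact ⟨0, fun h => absurd h hy⟩
  choose k hk using hstep
  let Z : ℕ → List α := fun n => (fun z => z ++ (List.replicate (k z) u).flatten ++ v)^[n] x
  have hZ : ∀ n, Z (n + 1) = Z n ++ (List.replicate (k (Z n)) u).flatten ++ v := fun n =>
    Function.iterate_succ_apply' _ n x
  have hZS : ∀ n, Z n ∈ LoopWords x u v := fun n => by
    induction n with
    | zero => exact ⟨[], by simp, by simp [Z]⟩
    | succ n ih => exact hZ n ▸ append_flatten_replicate_append_mem_loopWords ih _
  have hZlen : ∀ n, n ≤ (Z n).length := fun n => by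
    induction n with
    | zero => omega
    | succ n ih =>
      have := List.length_pos_iff.2 hv
      simp only [hZ, List.length_append]
      omega
  obtain ⟨W, hW⟩ := exists_hasPrefixWord_of_chain Z
    (fun n => by rw [hZ, List.append_assoc]; exact List.prefix_append _ _) hZlen
  refine ⟨W, ⟨fun n => k (Z n), fun n => ?_⟩, frequently_atTop.2 fun K => ?_⟩
  · convert hW n using 1
    induction n with
    | zero => simp [Z]
    | succ n ih =>
      simp only [List.range_succ, List.map_append, List.map_singleton, List.flatten_append,
        List.flatten_singleton, ← List.append_assoc] at ih ⊢
      rw [ih, hZ]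
  · obtain ⟨t, ht, htlen, htacc⟩ := hk (Z K) (hZS K)
    have hpre : HasPrefixWord W (Z K ++ (List.replicate (k (Z K)) u).flatten) :=
      (hW (K + 1)).of_prefix (by rw [hZ]; exact List.prefix_append _ _)
    exact ⟨t, (hZlen K).trans ht.le, hpre.run_eq M htlen ▸ htacc⟩

end DetAuto

theorem not_dbwRecognizable_of_langA_subset_of_langB_inter_eq_empty {α : Type}
    {L : Set (ℕ → α)} {x u v : List α} (hu : u ≠ []) (hv : v ≠ []) (hA : LangA x u v ⊆ L)
    (hB : LangB x u v ∩ L = ∅) : ¬ DBWRecognizable L := by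
  rintro ⟨N, acc, hacc⟩
  obtain ⟨W, hWB, hWacc⟩ := N.exists_mem_langB_frequently_mem acc hv fun y ⟨ws, hws, hy⟩ =>
    N.exists_visit_flatten_replicate acc hu fun w hw => (hacc w).1 (hA ⟨ws, hws, hy ▸ hw⟩)
  exact (Set.eq_empty_iff_forall_notMem.1 hB) W ⟨hWB, (hacc W).2 hWacc⟩

theorem stmt_5_general {Sig : Type} (L : Set (ℕ → Sig)) (hL : OmegaRegular L) :
    ¬ DBWRecognizable L ↔
      ∃ x x₁ x₂ : List Sig, x₁ ≠ [] ∧ x₂ ≠ [] ∧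
        LangA x x₁ x₂ ⊆ L ∧ LangB x x₁ x₂ ∩ L = ∅ := by
  obtain ⟨M, c, hMc⟩ := hL
  refine ⟨fun hL => ?_, fun ⟨x, u, v, hu, hv, hA, hB⟩ =>
    not_dbwRecognizable_of_langA_subset_of_langB_inter_eq_empty hu hv hA hB⟩
  obtain ⟨x, u, v, h⟩ : ∃ x u v, M.IsOddEvenLoopPair c (M.eval x) u v := by
    by_contra! hno
    exact hL (M.dbwRecognizable_of_forall_not_isOddEvenLoopPair c hMc hno)
  exact ⟨x, u, v, h.left_ne_nil, h.right_ne_nil, M.langA_subset_and_langB_inter_eq_empty c hMc h⟩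

/-- An ω-regular language `L` is not DBW-recognizable iff there are finite words
`x ∈ Σ*` and `x₁, x₂ ∈ Σ⁺` with `x·(x₁+x₂)*·x₁^ω ⊆ L` and `x·(x₁*·x₂)^ω ∩ L = ∅`. -/
theorem stmt_5 {Sig : Type} [Fintype Sig] (L : Set (ℕ → Sig)) (hL : OmegaRegular L) :
    ¬ DBWRecognizable L ↔
      ∃ x x₁ x₂ : List Sig, x₁ ≠ [] ∧ x₂ ≠ [] ∧
        LangA x x₁ x₂ ⊆ L ∧ LangB x x₁ x₂ ∩ L = ∅ :=
  stmt_5_general L hL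
end
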